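/- Let G be an arbitrary finite simple graph on n ≥ 1 vertices and let S_1, …, S_k be a greedy stable-set sequence of G, regarded as a proper coloring of G. Then the entropy of this coloring is at most H_χ(G) + log₂ e, where e is the base of natural logarithms. -/
import Mathlib


/-- A stable (independent) set of a simple graph, as a `Finset` of vertices. -/
def IsStableSet {V : Type*} (G : SimpleGraph V) (S : Finset V) : Prop :=
  ∀ v ∈ S, ∀ w ∈ S, ¬ G.Adj v w

/-- `S 0, S 1, …, S (k-1)` is a greedy stable-set sequence of `G`: the `S i` are
pairwise disjoint stable sets partitioning the vertex set, and each `S i` is a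
maximum-cardinality stable set among those avoiding `S 0 ∪ ⋯ ∪ S (i-1)`. -/
def IsGreedySeq {V : Type*} [Fintype V] (G : SimpleGraph V) {k : ℕ}
    (S : Fin k → Finset V) : Prop :=
  (∀ i, IsStableSet G (S i)) ∧
  (∀ i j, i ≠ j → Disjoint (S i) (S j)) ∧
  (∀ v : V, ∃ i, v ∈ S i) ∧
  (∀ i : Fin k, ∀ T : Finset V, IsStableSet G T →
    (∀ v ∈ T, ∀ j, j < i → v ∉ S j) → T.card ≤ (S i).card)

/-- The entropy `-∑ i (|C i|/n) log₂ (|C i|/n)` of a coloring with color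
classes `C 0, …, C (k-1)`. -/
noncomputable def coloringEntropy {V : Type*} [Fintype V] {k : ℕ}
    (C : Fin k → Finset V) : ℝ :=
  -∑ i, ((C i).card / (Fintype.card V : ℝ)) *
    Real.logb 2 ((C i).card / (Fintype.card V : ℝ))

/-- The chromatic entropy of `G`: the minimum entropy of a proper coloring
(a partition of the vertices into stable sets). -/
noncomputable def chromaticEntropy {V : Type*} [Fintype V] [DecidableEq V]
    (G : SimpleGraph V) : ℝ :=
  sInf {h : ℝ | ∃ (k : ℕ) (C : Fin k → Finset V),
    (∀ i, IsStableSet G (C i)) ∧ (∀ v : V, ∃! i, v ∈ C i) ∧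
    h = coloringEntropy C}


lemma log_factorial_bound (c : ℕ) :
    (c : ℝ) * Real.log c - c ≤ Real.log (c.factorial) := by
  rcases Nat.eq_zero_or_pos c with h | h
  · simp [h]
  have hf : (0:ℝ) < (c.factorial : ℝ) := by exact_mod_cast c.factorial_pos
  have h1 : (c:ℝ)^c / (c.factorial : ℝ) ≤ Real.exp c :=
    Real.pow_div_factorial_le_exp (x := (c:ℝ)) (by positivity) c
  have h2 : (c:ℝ)^c ≤ (c.factorial : ℝ) * Real.exp c := by
    rw [div_le_iff₀ hf] at h1; linarith
  have h3 := Real.log_le_log (by positivity) h2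
  rw [Real.log_pow, Real.log_mul (ne_of_gt hf) (Real.exp_ne_zero _), Real.log_exp] at h3
  linarith

lemma greedy_log_bound {V : Type*} [Fintype V] [DecidableEq V] (G : SimpleGraph V)
    {k : ℕ} (S : Fin k → Finset V) (hS : IsGreedySeq G S)
    (g : V → Fin k) (hg : ∀ v, v ∈ S (g v)) :
    ∀ C : Finset V, IsStableSet G C →
      Real.log (C.card.factorial) ≤ ∑ v ∈ C, Real.log ((S (g v)).card) := by
  intro C
  induction C using Finset.strongInduction with
  | _ C ih =>
    intro hC
    rcases C.eq_empty_or_nonempty with rfl | hne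
    · simp
    have him : (C.image g).Nonempty := hne.image g
    obtain ⟨v, hvC, hgv⟩ := Finset.mem_image.mp (Finset.min'_mem _ him)
    have hmin : ∀ w ∈ C, g v ≤ g w := by
      intro w hw
      rw [hgv]
      exact Finset.min'_le _ _ (Finset.mem_image_of_mem g hw)
    have hcard : C.card ≤ (S (g v)).card := by
      apply hS.2.2.2 (g v) C hC
      intro w hw j hj hwj
      have hlt : j < g w := lt_of_lt_of_le hj (hmin w hw)
      exact Finset.disjoint_left.mp (hS.2.1 j (g w) (ne_of_lt hlt)) hwj (hg w)
    have hrec := ih (C.erase v) (Finset.erase_ssubset hvC)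
      (fun a ha b hb => hC a (Finset.mem_of_mem_erase ha) b (Finset.mem_of_mem_erase hb))
    have hce : (C.erase v).card + 1 = C.card := Finset.card_erase_add_one hvC
    have hcpos : 0 < C.card := Finset.card_pos.mpr hne
    have hfac : C.card.factorial = C.card * (C.erase v).card.factorial := by
      rw [← hce]; exact Nat.factorial_succ _
    have hlog1 : Real.log C.card ≤ Real.log ((S (g v)).card) :=
      Real.log_le_log (by exact_mod_cast hcpos) (by exact_mod_cast hcard)
    have hsplit : ∑ w ∈ C, Real.log ((S (g w)).card)
        = Real.log ((S (g v)).card) + ∑ w ∈ C.erase v, Real.log ((S (g w)).card) :=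
      (Finset.add_sum_erase _ _ hvC).symm
    have hfpos : (0:ℝ) < ((C.erase v).card.factorial : ℝ) := by
      exact_mod_cast (C.erase v).card.factorial_pos
    rw [hfac, hsplit]
    push_cast
    rw [Real.log_mul (by exact_mod_cast hcpos.ne') hfpos.ne']
    exact add_le_add hlog1 hrec

lemma coloringEntropy_eq {V : Type*} [Fintype V] {m : ℕ} (D : Fin m → Finset V) :
    coloringEntropy D = ∑ i, (((D i).card : ℝ) / (Fintype.card V : ℝ)) *
      Real.logb 2 ((Fintype.card V : ℝ) / ((D i).card : ℝ)) := by
  rw [coloringEntropy, ← Finset.sum_neg_distrib]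
  apply Finset.sum_congr rfl
  intro i _
  rw [← inv_div (((D i).card : ℝ)) ((Fintype.card V : ℝ))]
  rw [Real.logb_inv, mul_neg]

lemma entropy_key {V : Type*} [Fintype V] [DecidableEq V] (G : SimpleGraph V)
    (hn : 1 ≤ Fintype.card V) {k : ℕ} (S : Fin k → Finset V) (hS : IsGreedySeq G S)
    {l : ℕ} (C : Fin l → Finset V) (hC1 : ∀ i, IsStableSet G (C i))
    (hC2 : ∀ v : V, ∃! i, v ∈ C i) :
    coloringEntropy S ≤ coloringEntropy C + Real.logb 2 (Real.exp 1) := by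
  classical
  have hN : (0:ℝ) < (Fintype.card V : ℝ) := by exact_mod_cast hn
  have hL : (0:ℝ) < Real.log 2 := Real.log_pos one_lt_two
  set N : ℝ := (Fintype.card V : ℝ) with hNdef
  choose g hg using hS.2.2.1
  choose h hh hhu using hC2
  have hSiff : ∀ v i, v ∈ S i ↔ g v = i := by
    intro v i
    constructor
    · intro hv
      by_contra hne
      exact Finset.disjoint_left.mp (hS.2.1 (g v) i hne) (hg v) hv
    · rintro rfl; exact hg v
  have hCiff : ∀ v j, v ∈ C j ↔ h v = j := by
    intro v j
    exact ⟨fun hv => (hhu v j hv).symm, by rintro rfl; exact hh v⟩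
  have hpart : ∀ {m : ℕ} (D : Fin m → Finset V) (p : V → Fin m),
      (∀ v i, v ∈ D i ↔ p v = i) →
      ∀ f : V → ℝ, ∑ i, ∑ v ∈ D i, f v = ∑ v, f v := by
    intro m D p hp f
    rw [← Finset.sum_fiberwise Finset.univ p f]
    apply Finset.sum_congr rfl
    intro i _
    apply Finset.sum_congr _ (fun _ _ => rfl)
    ext v
    simp [hp v i]
  -- per-class inequality
  have claim : ∀ j : Fin l, ∑ v ∈ C j, Real.log (N / ((S (g v)).card : ℝ))
      ≤ ((C j).card : ℝ) * Real.log (N / ((C j).card : ℝ)) + ((C j).card : ℝ) := by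
    intro j
    rcases Nat.eq_zero_or_pos (C j).card with hc0 | hcpos
    · rw [Finset.card_eq_zero.mp hc0]
      simp
    · have hcR : (0:ℝ) < ((C j).card : ℝ) := by exact_mod_cast hcpos
      have hlf := log_factorial_bound (C j).card
      have hgb := greedy_log_bound G S hS g hg (C j) (hC1 j)
      have hterm : ∀ v ∈ C j, Real.log (N / ((S (g v)).card:ℝ))
          = Real.log N - Real.log ((S (g v)).card:ℝ) := by
        intro v _
        have hs : (0:ℝ) < ((S (g v)).card : ℝ) := by
          exact_mod_cast Finset.card_pos.mpr ⟨v, hg v⟩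
        rw [Real.log_div hN.ne' hs.ne']
      rw [Finset.sum_congr rfl hterm, Finset.sum_sub_distrib, Finset.sum_const,
        Real.log_div hN.ne' hcR.ne', nsmul_eq_mul, mul_sub]
      linarith
  -- entropy formulas
  have hES : coloringEntropy S
      = (1/(N * Real.log 2)) * ∑ v, Real.log (N / ((S (g v)).card:ℝ)) := by
    rw [coloringEntropy_eq, ← hpart S g hSiff (fun v => Real.log (N / ((S (g v)).card:ℝ))),
      Finset.mul_sum]
    apply Finset.sum_congr rfl
    intro i _
    have hconst : ∑ v ∈ S i, Real.log (N / ((S (g v)).card:ℝ))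
        = (S i).card • Real.log (N / ((S i).card:ℝ)) := by
      rw [← Finset.sum_const]
      apply Finset.sum_congr rfl
      intro v hv
      rw [(hSiff v i).mp hv]
    rw [hconst, nsmul_eq_mul, Real.logb]
    ring
  have hEC : coloringEntropy C
      = (1/(N * Real.log 2)) * ∑ j, ((C j).card : ℝ) * Real.log (N / ((C j).card:ℝ)) := by
    rw [coloringEntropy_eq, Finset.mul_sum]
    apply Finset.sum_congr rfl
    intro j _
    rw [Real.logb]
    ring
  have hcs : ∑ j, ((C j).card : ℝ) = N := by
    have h1 := hpart C h hCiff (fun _ => (1:ℝ))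
    simpa using h1
  have hexp : Real.logb 2 (Real.exp 1) = (1/(N * Real.log 2)) * N := by
    rw [Real.logb, Real.log_exp]
    field_simp
  rw [hES, hEC, hexp, ← mul_add]
  apply mul_le_mul_of_nonneg_left _ (le_of_lt (one_div_pos.mpr (mul_pos hN hL)))
  calc ∑ v, Real.log (N / ((S (g v)).card:ℝ))
      = ∑ j, ∑ v ∈ C j, Real.log (N / ((S (g v)).card:ℝ)) :=
        (hpart C h hCiff _).symm
    _ ≤ ∑ j, (((C j).card : ℝ) * Real.log (N / ((C j).card:ℝ)) + ((C j).card : ℝ)) :=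
        Finset.sum_le_sum (fun j _ => claim j)
    _ = (∑ j, ((C j).card : ℝ) * Real.log (N / ((C j).card:ℝ))) + N := by
        rw [Finset.sum_add_distrib, hcs]


/-- Cardinal–Fiorini–Joret: the entropy of any greedy coloring of a graph `G`
is at most the chromatic entropy of `G` plus `log₂ e`. -/
theorem greedy_coloring_entropy_le {V : Type*} [Fintype V] [DecidableEq V]
    (G : SimpleGraph V) (hn : 1 ≤ Fintype.card V)
    {k : ℕ} (S : Fin k → Finset V) (hS : IsGreedySeq G S) :
    coloringEntropy S ≤ chromaticEntropy G + Real.logb 2 (Real.exp 1) := by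
  have hU : ∀ v : V, ∃! i, v ∈ S i := by
    intro v
    obtain ⟨i, hi⟩ := hS.2.2.1 v
    refine ⟨i, hi, fun j hj => ?_⟩
    by_contra hne
    exact Finset.disjoint_left.mp (hS.2.1 j i hne) hj hi
  have hmem : coloringEntropy S ∈ {h : ℝ | ∃ (k : ℕ) (C : Fin k → Finset V),
      (∀ i, IsStableSet G (C i)) ∧ (∀ v : V, ∃! i, v ∈ C i) ∧
      h = coloringEntropy C} := ⟨k, S, hS.1, hU, rfl⟩
  have hlb : coloringEntropy S - Real.logb 2 (Real.exp 1) ≤ chromaticEntropy G := by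
    rw [chromaticEntropy]
    apply le_csInf ⟨_, hmem⟩
    rintro b ⟨l, C, hC1, hC2, rfl⟩
    have := entropy_key G hn S hS C hC1 hC2
    linarith
  linarith
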